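/- Let $\phi\colon\mathcal{A}\to\operatorname{End}(V)$ be a unital positive linear map from a unital $C^*$-algebra to the operators on a finite-dimensional Hilbert space $V$. Then for every normal element $a\in\mathcal{A}$, Kadison's inequality holds: $\phi(a)\phi(a)^*\le\phi(aa^*)$ in the operator order on $V$. -/

import Mathlib

/-!
Functional calculus along a fine partition of unity on the spectrum of a normal `a` produces
positive `e i` with `∑ e i = 1` such that `∑ w i • e i ≈ a` and `∑ |w i|² • e i ≈ a a⋆`.
For such step elements the inequality is pure algebra: with `T = ∑ w i • φ (e i)`,
`∑ |w i|² • φ (e i) - T T⋆ = ∑ (w i - T) φ (e i) (w i - T)⋆ ≥ 0`.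
Positive maps between C⋆-algebras are continuous and the C⋆-order is closed, so the inequality
passes to the limit.
-/

open Metric
open scoped ComplexOrder

universe u

lemma sum_smul_mul_star_sum_smul_le {B : Type*} [Ring B] [StarRing B] [PartialOrder B]
    [StarOrderedRing B] [Algebra ℂ B] [StarModule ℂ B] {ι : Type*} [Fintype ι]
    (P : ι → B) (w : ι → ℂ) (hP : ∀ i, 0 ≤ P i) (hsum : ∑ i, P i = 1) :
    (∑ i, w i • P i) * star (∑ i, w i • P i) ≤ ∑ i, (w i * star (w i)) • P i := by
  set T := ∑ i, w i • P i
  have hT : star T = ∑ i, star (w i) • P i := by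
    simp only [T, star_sum, star_smul, fun i => (hP i).isSelfAdjoint.star_eq]
  have key : ∑ i, (algebraMap ℂ B (w i) - T) * P i * star (algebraMap ℂ B (w i) - T)
      = ∑ i, (w i * star (w i)) • P i - T * star T := by
    have h1 : ∑ i, star (w i) • (T * P i) = T * star T := by
      simp only [hT, Finset.mul_sum, mul_smul_comm]
    have h2 : ∑ i, w i • (P i * star T) = T * star T := by
      simp only [T, Finset.sum_mul, smul_mul_assoc]
    simp only [star_sub, Algebra.algebraMap_eq_smul_one, star_smul, star_one, sub_mul, mul_sub,
      smul_mul_assoc, one_mul, mul_smul_comm, mul_one, Finset.sum_sub_distrib, ← Finset.sum_mul,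
      ← Finset.mul_sum, hsum, smul_sub, smul_smul, h1, h2, mul_comm (star _)]
    abel
  exact sub_nonneg.mp (key ▸ Finset.sum_nonneg fun i _ => star_right_conjugate_nonneg (hP i) _)

lemma IsCompact.exists_partitionOfUnity_ball {X : Type u} [MetricSpace X] {K : Set X}
    (hK : IsCompact K) {δ : ℝ} (hδ : 0 < δ) :
    ∃ (ι : Type u) (_ : Fintype ι) (w : ι → X) (f : PartitionOfUnity ι X K),
      (∀ i, w i ∈ K) ∧ f.IsSubordinate fun i => ball (w i) δ := by
  obtain ⟨t, htK, ht, hcover⟩ := finite_cover_balls_of_compact hK hδ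
  obtain ⟨f, hf⟩ := PartitionOfUnity.exists_isSubordinate hK.isClosed (fun i : t => ball (i : X) δ)
    (fun _ => isOpen_ball) (by simpa only [Set.biUnion_eq_iUnion] using hcover)
  exact ⟨t, ht.fintype, (↑), f, fun i => htK i.2, hf⟩

def partitionOfUnityPairs (A : Type*) [Ring A] [StarRing A] [PartialOrder A] [Algebra ℂ A] :
    Set (A × A) :=
  {p | ∃ (ι : Type) (_ : Fintype ι) (e : ι → A) (w : ι → ℂ), (∀ i, 0 ≤ e i) ∧ ∑ i, e i = 1 ∧
    p = (∑ i, w i • e i, ∑ i, (w i * star (w i)) • e i)}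

section CStarAlgebra

variable {A : Type*} [CStarAlgebra A]

lemma PartitionOfUnity.sum_cfc {ι : Type*} [Fintype ι] (a : A) [IsStarNormal a]
    (f : PartitionOfUnity ι ℂ (spectrum ℂ a)) :
    ∑ i, cfc (fun z => (f i z : ℂ)) a = 1 := by
  rw [← cfc_sum_univ .., ← cfc_one ℂ a]
  refine cfc_congr fun z hz => ?_
  simp only [Finset.sum_apply, Pi.one_apply]
  exact_mod_cast (finsum_eq_sum_of_fintype _).symm.trans (f.sum_eq_one hz)

lemma PartitionOfUnity.norm_cfc_sub_sum_smul_le {ι : Type*} [Fintype ι] (a : A) [IsStarNormal a]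
    (f : PartitionOfUnity ι ℂ (spectrum ℂ a)) (w : ι → ℂ) {g : ℂ → ℂ}
    (hg : ContinuousOn g (spectrum ℂ a)) {η : ℝ} (hη : 0 ≤ η)
    (hgw : ∀ z ∈ spectrum ℂ a, ∀ i, f i z ≠ 0 → ‖g z - g (w i)‖ ≤ η) :
    ‖cfc g a - ∑ i, g (w i) • cfc (fun z => (f i z : ℂ)) a‖ ≤ η := by
  have hsum : ∑ i, g (w i) • cfc (fun z => (f i z : ℂ)) a
      = cfc (fun z => ∑ i, g (w i) * f i z) a := by
    rw [← Finset.sum_fn, cfc_sum_univ _ a fun i => by fun_prop]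
    exact Finset.sum_congr rfl fun i _ => (cfc_const_mul _ _ a).symm
  rw [hsum, ← cfc_sub ..]
  refine norm_cfc_le hη fun z hz => ?_
  have hf1 : ∑ i, f i z = 1 := (finsum_eq_sum_of_fintype _).symm.trans (f.sum_eq_one hz)
  calc ‖g z - ∑ i, g (w i) * f i z‖ = ‖∑ i, (g z - g (w i)) * f i z‖ := by
        simp only [sub_mul, Finset.sum_sub_distrib, ← Finset.mul_sum, ← Complex.ofReal_sum, hf1,
          Complex.ofReal_one, mul_one]
    _ ≤ ∑ i, ‖g z - g (w i)‖ * f i z := by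
        refine (norm_sum_le _ _).trans_eq (Finset.sum_congr rfl fun i _ => ?_)
        rw [norm_mul, Complex.norm_real, Real.norm_of_nonneg (f.nonneg i z)]
    _ ≤ ∑ i, η * f i z := by
        refine Finset.sum_le_sum fun i _ => ?_
        by_cases hi : f i z = 0
        · simp [hi]
        · exact mul_le_mul_of_nonneg_right (hgw z hz i hi) (f.nonneg i z)
    _ = η := by rw [← Finset.mul_sum, hf1, mul_one]

variable [PartialOrder A] [StarOrderedRing A]

lemma mem_closure_partitionOfUnityPairs (a : A) [IsStarNormal a] :
    (a, a * star a) ∈ closure (partitionOfUnityPairs A) := by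
  have hσ : IsCompact (spectrum ℂ a) := spectrum.isCompact a
  rw [Metric.mem_closure_iff]
  intro ε hε
  obtain ⟨δ, hδ, hsq⟩ := Metric.uniformContinuousOn_iff.mp
    (hσ.uniformContinuousOn_of_continuous (f := fun z : ℂ => z * star z)
      (by fun_prop : Continuous fun z : ℂ => z * star z).continuousOn)
    (ε / 2) (half_pos hε)
  obtain ⟨ι, _, w, f, hwσ, hf⟩ := hσ.exists_partitionOfUnity_ball (lt_min hδ (half_pos hε))
  have hnear : ∀ z ∈ spectrum ℂ a, ∀ i, f i z ≠ 0 → dist z (w i) < min δ (ε / 2) :=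
    fun z _ i hi => hf i (subset_tsupport _ hi)
  refine ⟨_, ⟨ι, inferInstance, fun i => cfc (fun z => (f i z : ℂ)) a, w,
    fun i => cfc_nonneg fun z _ => Complex.zero_le_real.mpr (f.nonneg i z), f.sum_cfc a, rfl⟩, ?_⟩
  rw [Prod.dist_eq, max_lt_iff, dist_eq_norm, dist_eq_norm]
  constructor
  · calc ‖a - ∑ i, w i • cfc (fun z => (f i z : ℂ)) a‖
        = ‖cfc (fun z => z) a - ∑ i, w i • cfc (fun z => (f i z : ℂ)) a‖ := by rw [cfc_id' ℂ a]
      _ ≤ ε / 2 := f.norm_cfc_sub_sum_smul_le a w continuousOn_id (half_pos hε).le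
          fun z hz i hi => (dist_eq_norm z (w i) ▸ hnear z hz i hi).le.trans (min_le_right _ _)
      _ < ε := half_lt_self hε
  · have hmul : cfc (fun z : ℂ => z * star z) a = a * star a := by
      rw [cfc_mul (fun z : ℂ => z) star a, cfc_id' ℂ a, cfc_star_id (R := ℂ) (a := a)]
    calc ‖a * star a - ∑ i, (w i * star (w i)) • cfc (fun z => (f i z : ℂ)) a‖
        = ‖cfc (fun z : ℂ => z * star z) a
            - ∑ i, (w i * star (w i)) • cfc (fun z => (f i z : ℂ)) a‖ := by rw [hmul]
      _ ≤ ε / 2 := f.norm_cfc_sub_sum_smul_le a w (by fun_prop) (half_pos hε).le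
          fun z hz i hi => by
            rw [← dist_eq_norm]
            exact (hsq z hz (w i) (hwσ i) ((hnear z hz i hi).trans_le (min_le_left _ _))).le
      _ < ε := half_lt_self hε

theorem PositiveLinearMap.mul_star_le_map_mul_star {B : Type*} [CStarAlgebra B] [PartialOrder B]
    [StarOrderedRing B] (φ : A →ₚ[ℂ] B) (hφ : φ 1 = 1) (a : A) [IsStarNormal a] :
    φ a * star (φ a) ≤ φ (a * star a) := by
  have hclosed : IsClosed {p : A × A | φ p.1 * star (φ p.1) ≤ φ p.2} :=
    isClosed_le (by fun_prop) (by fun_prop)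
  refine closure_minimal ?_ hclosed (mem_closure_partitionOfUnityPairs a)
  rintro _ ⟨ι, _, e, w, he, hsum, rfl⟩
  simp only [Set.mem_ofPred_eq, map_sum, map_smul]
  exact sum_smul_mul_star_sum_smul_le (fun i => φ (e i)) w (fun i => φ.map_nonneg (he i))
    (by rw [← map_sum, hsum, hφ])

end CStarAlgebra

/-- Kadison's inequality: if `φ : 𝒜 → End(V)` is a unital positive linear map from a unital
C*-algebra to the operators on a finite-dimensional Hilbert space, then for every normal
element `a`, `φ(a) φ(a)^* ≤ φ(a a^*)` in the Loewner order (i.e. the difference is a positive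
operator). -/
theorem kadison_inequality
    {A : Type*} [NormedRing A] [StarRing A] [CStarRing A] [CompleteSpace A]
    [NormedAlgebra ℂ A] [StarModule ℂ A] [PartialOrder A] [StarOrderedRing A]
    {V : Type*} [NormedAddCommGroup V] [InnerProductSpace ℂ V] [FiniteDimensional ℂ V]
    (φ : A →ₗ[ℂ] (V →L[ℂ] V))
    (hunital : φ 1 = 1)
    (hpos : ∀ x : A, 0 ≤ x → (φ x).IsPositive)
    (a : A) (ha : a * star a = star a * a) :
    ((φ (a * star a)) - (φ a) ∘L ContinuousLinearMap.adjoint (φ a)).IsPositive := by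
  have : CompleteSpace V := FiniteDimensional.complete ℂ V
  let : CStarAlgebra A := {}
  have : IsStarNormal a := ⟨ha.symm⟩
  let ψ : A →ₚ[ℂ] (V →L[ℂ] V) :=
    .mk₀ φ fun x hx => (ContinuousLinearMap.nonneg_iff_isPositive _).mpr (hpos x hx)
  exact (ContinuousLinearMap.le_def _ _).mp (ψ.mul_star_le_map_mul_star hunital a)
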